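/- For every integer ℓ ≥ 1, the function a ↦ G²_ℓ(a) is strictly convex on [ℓw, 4ℓ], and for every v ∈ ℝ the function a ↦ −v·a + G²_ℓ(a) attains its minimum on [ℓw, 4ℓ] at a unique point a_ℓ(v). Moreover, if v ≤ 1 + ℓw/σ then a_ℓ(v) = ℓw, while if v > 1 + ℓw/σ then a_ℓ(v) is the unique solution a ∈ (ℓw, 4ℓ) of the equation v = √((4−w)/(4−a/ℓ)) + a/σ. -/

import Mathlib

/-- Surface tension of the type-2 stack of `ℓ` layers and area `a`:
`τ²_ℓ(a) = 8ℓ − 2√((4ℓ−a)(4−w)ℓ)`. -/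
noncomputable def tau2 (w : ℝ) (ℓ : ℕ) (a : ℝ) : ℝ :=
  8 * (ℓ : ℝ) - 2 * Real.sqrt ((4 * (ℓ : ℝ) - a) * ((4 - w) * (ℓ : ℝ)))

/-- `G²_ℓ(a) = τ²_ℓ(a) + a²/(2σ)` (the finite branch, relevant on `[ℓw, 4ℓ]`). -/
noncomputable def G2 (w σ : ℝ) (ℓ : ℕ) (a : ℝ) : ℝ :=
  tau2 w ℓ a + a ^ 2 / (2 * σ)

/-! On `(-∞, 4ℓ)` the derivative of `G²_ℓ` is `√((4−w)/(4−a/ℓ)) + a/σ`, which is strictly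
increasing, so `G²_ℓ` is strictly convex there and every tilt `a ↦ −v·a + G²_ℓ(a)` has at most one
minimiser on the compact interval `[ℓw, 4ℓ]`. By the tangent-line inequality for convex functions,
the minimiser is `ℓw` when the slope `1 + ℓw/σ` of `G²_ℓ` at `ℓw` is at least `v`; otherwise it is
the point where the derivative equals `v`, which exists by the intermediate value theorem. -/

open Set

noncomputable def G2deriv (w σ : ℝ) (ℓ : ℕ) (a : ℝ) : ℝ :=
  √((4 - w) / (4 - a / ℓ)) + a / σ

lemma ConvexOn.add_mul_sub_le_of_hasDerivAt {S : Set ℝ} {f : ℝ → ℝ} {x y f' : ℝ}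
    (hf : ConvexOn ℝ S f) (hx : x ∈ S) (hy : y ∈ S) (hf' : HasDerivAt f f' x) :
    f x + f' * (y - x) ≤ f y := by
  rcases lt_trichotomy x y with hxy | rfl | hyx
  · have := hf.le_slope_of_hasDerivAt hx hy hxy hf'
    rw [slope_def_field, le_div_iff₀ (sub_pos.2 hxy)] at this
    linarith
  · simp
  · have := hf.slope_le_of_hasDerivAt hy hx hyx hf'
    rw [slope_def_field, div_le_iff₀ (sub_pos.2 hyx)] at this
    linarith

section

variable {w σ : ℝ} {ℓ : ℕ}

lemma continuous_G2 : Continuous (G2 w σ ℓ) := by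
  unfold G2 tau2
  fun_prop

lemma hasDerivAt_G2 (hw4 : w < 4) (hℓ : 0 < ℓ) {x : ℝ} (hx : x < 4 * ℓ) :
    HasDerivAt (G2 w σ ℓ) (G2deriv w σ ℓ x) x := by
  set K : ℝ := (4 - w) * ℓ
  have hK : 0 < K := mul_pos (by linarith) (by exact_mod_cast hℓ)
  have hd : 0 < 4 * (ℓ : ℝ) - x := by linarith
  have hinner : HasDerivAt (fun y : ℝ => (4 * ℓ - y) * K) (-K) x := by
    simpa using ((hasDerivAt_id x).const_sub (4 * (ℓ : ℝ))).mul_const K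
  have hG2 : HasDerivAt (G2 w σ ℓ) (K / √((4 * ℓ - x) * K) + x / σ) x := by
    refine ((((Real.hasDerivAt_sqrt (mul_pos hd hK).ne').comp x hinner).const_mul 2
      |>.const_sub (8 * (ℓ : ℝ))).add ((hasDerivAt_pow 2 x).div_const (2 * σ))).congr_deriv ?_
    field_simp
    ring
  have hsqrt : K / √((4 * ℓ - x) * K) = √((4 - w) / (4 - x / ℓ)) := by
    have : (4 - w) / (4 - x / ℓ) = K ^ 2 / ((4 * ℓ - x) * K) := by
      simp only [K]
      field_simp
    rw [this, Real.sqrt_div' _ (mul_pos hd hK).le, Real.sqrt_sq hK.le]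
  rwa [hsqrt] at hG2

lemma G2deriv_strictMonoOn (hw4 : w < 4) (hσ : 0 < σ) (hℓ : 0 < ℓ) :
    StrictMonoOn (G2deriv w σ ℓ) (Iio (4 * ℓ)) := by
  have hℓ' : (0 : ℝ) < ℓ := by exact_mod_cast hℓ
  intro x _ y hy hxy
  have hy' : 0 < 4 - y / ℓ := by
    rw [sub_pos, div_lt_iff₀ hℓ']
    linarith [mem_Iio.1 hy]
  have hsqrt : √((4 - w) / (4 - x / ℓ)) ≤ √((4 - w) / (4 - y / ℓ)) := by
    have : 0 ≤ 4 - w := by linarith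
    gcongr
  have : x / σ < y / σ := by gcongr
  exact add_lt_add_of_le_of_lt hsqrt this

lemma G2deriv_left_endpoint (hw : w ≠ 4) (hℓ : ℓ ≠ 0) :
    G2deriv w σ ℓ (ℓ * w) = 1 + ℓ * w / σ := by
  rw [G2deriv, mul_div_cancel_left₀ w (Nat.cast_ne_zero.2 hℓ), div_self (sub_ne_zero.2 hw.symm),
    Real.sqrt_one]

lemma G2_strictConvexOn_Iic (hw4 : w < 4) (hσ : 0 < σ) (hℓ : 0 < ℓ) :
    StrictConvexOn ℝ (Iic (4 * (ℓ : ℝ))) (G2 w σ ℓ) := by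
  refine StrictMonoOn.strictConvexOn_of_deriv (convex_Iic _) continuous_G2.continuousOn ?_
  rw [interior_Iic]
  intro x hx y hy hxy
  rw [(hasDerivAt_G2 hw4 hℓ hx).deriv, (hasDerivAt_G2 hw4 hℓ hy).deriv]
  exact G2deriv_strictMonoOn hw4 hσ hℓ hx hy hxy

lemma exists_G2deriv_eq (hw0 : 0 < w) (hw4 : w < 4) (hσ : 0 < σ) (hℓ : 0 < ℓ) {v : ℝ}
    (hv : 1 + ℓ * w / σ < v) : ∃ a ∈ Ioo (ℓ * w : ℝ) (4 * ℓ), G2deriv w σ ℓ a = v := by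
  have hℓ' : (0 : ℝ) < ℓ := by exact_mod_cast hℓ
  have hv1 : 1 < v := by
    have : 0 < ℓ * w / σ := by positivity
    linarith
  have hw : 0 < 4 - w := by linarith
  -- `b` is where the square-root term of `G2deriv` equals `v`
  set b : ℝ := ℓ * (4 - (4 - w) / v ^ 2)
  have hquot : (4 - w) / v ^ 2 < 4 - w := div_lt_self hw (by nlinarith)
  have hb : b ∈ Ioo (ℓ * w : ℝ) (4 * ℓ) := by
    constructor <;> nlinarith [div_pos hw (by positivity : (0 : ℝ) < v ^ 2)]
  have hGb : G2deriv w σ ℓ b = v + b / σ := by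
    have : 4 - b / ℓ = (4 - w) / v ^ 2 := by
      rw [mul_div_cancel_left₀ _ hℓ'.ne']
      ring
    rw [G2deriv, this, div_div_cancel₀ hw.ne', Real.sqrt_sq (by linarith)]
  have hcont : ContinuousOn (G2deriv w σ ℓ) (Icc (ℓ * w) b) := by
    refine (ContinuousOn.div continuousOn_const (by fun_prop) fun x hx => ?_).sqrt.add
      (by fun_prop)
    have : x / ℓ < 4 := by
      rw [div_lt_iff₀ hℓ']
      linarith [hx.2, hb.2]
    linarith
  have hmem : v ∈ Ioc (G2deriv w σ ℓ (ℓ * w)) (G2deriv w σ ℓ b) := by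
    rw [G2deriv_left_endpoint hw4.ne hℓ.ne', hGb]
    exact ⟨hv, le_add_of_nonneg_right (div_nonneg ((mul_pos hℓ' hw0).le.trans hb.1.le) hσ.le)⟩
  obtain ⟨a, ha, hav⟩ := intermediate_value_Ioc hb.1.le hcont hmem
  exact ⟨a, ⟨ha.1, ha.2.trans_lt hb.2⟩, hav⟩

end

theorem G2_strictConvex_unique_minimizer_general (w σ : ℝ) (hw0 : 0 < w) (hw4 : w < 4)
    (hσ : 0 < σ) (ℓ : ℕ) (hℓ : 1 ≤ ℓ) :
    StrictConvexOn ℝ (Set.Icc ((ℓ : ℝ) * w) (4 * (ℓ : ℝ))) (G2 w σ ℓ) ∧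
    (∀ v : ℝ, ∃! a : ℝ, a ∈ Set.Icc ((ℓ : ℝ) * w) (4 * (ℓ : ℝ)) ∧
        ∀ b ∈ Set.Icc ((ℓ : ℝ) * w) (4 * (ℓ : ℝ)),
          -v * a + G2 w σ ℓ a ≤ -v * b + G2 w σ ℓ b) ∧
    (∀ v : ℝ, v ≤ 1 + (ℓ : ℝ) * w / σ →
        ∀ b ∈ Set.Icc ((ℓ : ℝ) * w) (4 * (ℓ : ℝ)),
          -v * ((ℓ : ℝ) * w) + G2 w σ ℓ ((ℓ : ℝ) * w) ≤ -v * b + G2 w σ ℓ b) ∧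
    (∀ v : ℝ, 1 + (ℓ : ℝ) * w / σ < v →
        ∃ a : ℝ, a ∈ Set.Ioo ((ℓ : ℝ) * w) (4 * (ℓ : ℝ)) ∧
          v = Real.sqrt ((4 - w) / (4 - a / (ℓ : ℝ))) + a / σ ∧
          (∀ b ∈ Set.Icc ((ℓ : ℝ) * w) (4 * (ℓ : ℝ)),
            -v * a + G2 w σ ℓ a ≤ -v * b + G2 w σ ℓ b) ∧
          (∀ a' ∈ Set.Ioo ((ℓ : ℝ) * w) (4 * (ℓ : ℝ)),
            v = Real.sqrt ((4 - w) / (4 - a' / (ℓ : ℝ))) + a' / σ → a' = a)) := by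
  have hAB : (ℓ : ℝ) * w < 4 * ℓ := by
    rw [mul_comm]; exact mul_lt_mul_of_pos_right hw4 (by exact_mod_cast hℓ)
  have hconv := G2_strictConvexOn_Iic hw4 hσ hℓ
  have hsub : Icc ((ℓ : ℝ) * w) (4 * ℓ) ⊆ Iic (4 * ℓ) := Icc_subset_Iic_self
  have tangent : ∀ c ∈ Ico ((ℓ : ℝ) * w) (4 * ℓ), ∀ b ∈ Icc ((ℓ : ℝ) * w) (4 * ℓ),
      G2 w σ ℓ c + G2deriv w σ ℓ c * (b - c) ≤ G2 w σ ℓ b := fun c hc b hb =>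
    hconv.convexOn.add_mul_sub_le_of_hasDerivAt hc.2.le (hsub hb) (hasDerivAt_G2 hw4 hℓ hc.2)
  refine ⟨hconv.subset hsub (convex_Icc _ _), fun v => ?_, fun v hv b hb => ?_, fun v hv => ?_⟩
  · have htilt : StrictConvexOn ℝ (Icc ((ℓ : ℝ) * w) (4 * ℓ)) (fun a => -v * a + G2 w σ ℓ a) :=
      ((LinearMap.mulLeft ℝ (-v)).convexOn (convex_Icc _ _)).add_strictConvexOn
        (hconv.subset hsub (convex_Icc _ _))
    obtain ⟨a, ha, hmin⟩ := isCompact_Icc.exists_isMinOn (nonempty_Icc.2 hAB.le)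
      (continuous_const.mul continuous_id |>.add continuous_G2).continuousOn
    refine ⟨a, ⟨ha, isMinOn_iff.1 hmin⟩, fun a' ⟨ha', hmin'⟩ => ?_⟩
    exact htilt.eq_of_isMinOn (isMinOn_iff.2 hmin') hmin ha' ha
  · have := tangent _ ⟨le_rfl, hAB⟩ b hb
    rw [G2deriv_left_endpoint hw4.ne (Nat.one_le_iff_ne_zero.1 hℓ)] at this
    nlinarith [mul_nonneg (sub_nonneg.2 hv) (sub_nonneg.2 hb.1)]
  · obtain ⟨a, ha, hav⟩ := exists_G2deriv_eq hw0 hw4 hσ hℓ hv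
    refine ⟨a, ha, hav.symm, fun b hb => ?_, fun a' ha' hva' => ?_⟩
    · have := tangent a (Ioo_subset_Ico_self ha) b hb
      rw [hav] at this
      linarith
    · exact (G2deriv_strictMonoOn hw4 hσ hℓ).injOn ha'.2 ha.2 (hva'.symm.trans hav.symm)

/-- for every integer `ℓ ≥ 1`, `G²_ℓ` is strictly convex on `[ℓw, 4ℓ]`;
for every `v` the function `a ↦ −v·a + G²_ℓ(a)` has a unique minimizer `a_ℓ(v)` on
`[ℓw, 4ℓ]`; if `v ≤ 1 + ℓw/σ` the minimizer is `ℓw`, and if `v > 1 + ℓw/σ` the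
minimizer is the unique solution `a ∈ (ℓw, 4ℓ)` of `v = √((4−w)/(4−a/ℓ)) + a/σ`. -/
theorem G2_strictConvex_unique_minimizer (w σ : ℝ) (hw0 : 0 < w) (hw4 : w < 4)
    (hσ : 0 < σ) (hnd : ∀ n : ℕ, (n : ℝ) ≠ 4 / (4 - w)) (ℓ : ℕ) (hℓ : 1 ≤ ℓ) :
    StrictConvexOn ℝ (Set.Icc ((ℓ : ℝ) * w) (4 * (ℓ : ℝ))) (G2 w σ ℓ) ∧
    (∀ v : ℝ, ∃! a : ℝ, a ∈ Set.Icc ((ℓ : ℝ) * w) (4 * (ℓ : ℝ)) ∧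
        ∀ b ∈ Set.Icc ((ℓ : ℝ) * w) (4 * (ℓ : ℝ)),
          -v * a + G2 w σ ℓ a ≤ -v * b + G2 w σ ℓ b) ∧
    (∀ v : ℝ, v ≤ 1 + (ℓ : ℝ) * w / σ →
        ∀ b ∈ Set.Icc ((ℓ : ℝ) * w) (4 * (ℓ : ℝ)),
          -v * ((ℓ : ℝ) * w) + G2 w σ ℓ ((ℓ : ℝ) * w) ≤ -v * b + G2 w σ ℓ b) ∧
    (∀ v : ℝ, 1 + (ℓ : ℝ) * w / σ < v →
        ∃ a : ℝ, a ∈ Set.Ioo ((ℓ : ℝ) * w) (4 * (ℓ : ℝ)) ∧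
          v = Real.sqrt ((4 - w) / (4 - a / (ℓ : ℝ))) + a / σ ∧
          (∀ b ∈ Set.Icc ((ℓ : ℝ) * w) (4 * (ℓ : ℝ)),
            -v * a + G2 w σ ℓ a ≤ -v * b + G2 w σ ℓ b) ∧
          (∀ a' ∈ Set.Ioo ((ℓ : ℝ) * w) (4 * (ℓ : ℝ)),
            v = Real.sqrt ((4 - w) / (4 - a' / (ℓ : ℝ))) + a' / σ → a' = a)) :=
  G2_strictConvex_unique_minimizer_general w σ hw0 hw4 hσ ℓ hℓ
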